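/- Let $f_1, \ldots, f_n : \mathbb{R}^d \to \mathbb{R}$ each have $L$-Lipschitz gradients, let $\pi$ be a permutation of $\{1, \ldots, n\}$, let $\eta > 0$, and define iterates by $w_1 = w_0 - \eta v_0$ with $v_0 = \nabla P(w_0)$ where $P = \frac{1}{n}\sum_i f_i$, and $v_t = \frac{n+1}{n+1-t}(\nabla f_{\pi(t)}(w_t) - \nabla f_{\pi(t)}(w_{t-1})) + v_{t-1}$, $w_{t+1} = w_t - \eta v_t$, for $t = 1, \ldots, n$. If additionally $\|v_t\| \leq \|v_0\|$ for all $t$, then with $\Delta_n = \sum_{t=0}^n v_t$ one has $\left\|\nabla P(w_0) - \frac{\Delta_n}{n+1}\right\|^2 \leq \eta^2 n^2 L^2 \|\nabla P(w_0)\|^2$. -/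

import Mathlib

/-!
Writing `g s = ∇f_{π(s+1)}(w_{s+1}) - ∇f_{π(s+1)}(w_s)`, the recursion says
`(n - s) (v_{s+1} - v_s) = (n + 1) g s`, and summation by parts turns `Δ_n` into
`(n + 1) (v_0 + ∑ g s)`; the deviation is therefore `-∑ g s`.  Each `g s` is bounded by
`L ‖w_{s+1} - w_s‖ = L η ‖v_s‖ ≤ L η ‖v_0‖`, and there are `n` of them.
-/

open Finset

theorem sum_range_succ_eq_smul_add_sum_smul_sub {R E : Type*} [Ring R] [AddCommGroup E]
    [Module R E] (v : ℕ → E) (N : ℕ) :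
    ∑ k ∈ range (N + 1), v k
      = ((N : R) + 1) • v 0 + ∑ s ∈ range N, ((N : R) - s) • (v (s + 1) - v s) := by
  induction N with
  | zero => simp
  | succ N ih =>
    have hv : v (N + 1) = v 0 + ∑ s ∈ range (N + 1), (v (s + 1) - v s) := by
      rw [sum_range_sub]; abel
    have hweights : ∀ s ∈ range (N + 1),
        (((N + 1 : ℕ) : R) - s) • (v (s + 1) - v s)
          = ((N : R) - s) • (v (s + 1) - v s) + (v (s + 1) - v s) := by
      intro s _
      push_cast
      rw [add_sub_right_comm, add_smul, one_smul]
    rw [sum_range_succ, ih, hv, sum_congr rfl hweights, sum_add_distrib,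
      sum_range_succ (fun s => ((N : R) - s) • (v (s + 1) - v s)), sub_self, zero_smul]
    push_cast
    simp only [add_smul, one_smul]
    abel

theorem inv_smul_sum_range_eq_add_sum_of_sub_eq {K E : Type*} [Field K] [CharZero K]
    [AddCommGroup E] [Module K E] {n : ℕ} (v : ℕ → E) (g : Fin n → E)
    (hvg : ∀ s : Fin n, v (s + 1) - v s = (((n : K) + 1) / (n - s)) • g s) :
    ((n : K) + 1)⁻¹ • ∑ t ∈ range (n + 1), v t = v 0 + ∑ s, g s := by
  have hweighted : ∀ s : Fin n, ((n : K) - s) • (v (s + 1) - v s) = ((n : K) + 1) • g s := by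
    intro s
    have hs : (n : K) - s ≠ 0 := sub_ne_zero.mpr (by exact_mod_cast s.isLt.ne')
    rw [hvg, smul_smul, mul_div_cancel₀ _ hs]
  have hn : (n : K) + 1 ≠ 0 := by exact_mod_cast n.succ_ne_zero
  rw [sum_range_succ_eq_smul_add_sum_smul_sub (R := K), sum_range, sum_congr rfl fun s _ =>
    hweighted s, ← smul_sum, ← smul_add, inv_smul_smul₀ hn]

theorem adjusted_sarah_exact_deviation_bound {d : ℕ} (n : ℕ)
    (L η : ℝ)
    (f : Fin n → EuclideanSpace ℝ (Fin d) → ℝ)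
    (hlip : ∀ i w w', ‖gradient (f i) w - gradient (f i) w'‖ ≤ L * ‖w - w'‖)
    (π : Equiv.Perm (Fin n))
    (P : EuclideanSpace ℝ (Fin d) → ℝ)
    (v w : ℕ → EuclideanSpace ℝ (Fin d))
    (hv0 : v 0 = gradient P (w 0))
    (hw1 : w 1 = w 0 - η • v 0)
    (hv : ∀ t (h1 : 1 ≤ t) (h2 : t ≤ n),
      v t = (((n : ℝ) + 1) / ((n : ℝ) + 1 - (t : ℝ))) •
          (gradient (f (π ⟨t - 1, by omega⟩)) (w t)
            - gradient (f (π ⟨t - 1, by omega⟩)) (w (t - 1)))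
        + v (t - 1))
    (hw : ∀ t, 1 ≤ t → t ≤ n → w (t + 1) = w t - η • v t)
    (hnorm : ∀ t, t ≤ n → ‖v t‖ ≤ ‖v 0‖) :
    ‖gradient P (w 0) - ((n : ℝ) + 1)⁻¹ • ∑ t ∈ Finset.range (n + 1), v t‖ ^ 2
      ≤ η ^ 2 * n ^ 2 * L ^ 2 * ‖gradient P (w 0)‖ ^ 2 := by
  set g : Fin n → EuclideanSpace ℝ (Fin d) := fun s =>
    gradient (f (π s)) (w (s + 1)) - gradient (f (π s)) (w s)
  have hvg : ∀ s : Fin n, v (s + 1) - v s = (((n : ℝ) + 1) / (n - s)) • g s := by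
    intro s
    have := hv (s + 1) (by omega) s.isLt
    simp only [Nat.add_sub_cancel, Fin.eta] at this
    rw [this, add_sub_cancel_right, Nat.cast_succ, add_sub_add_right_eq_sub]
  have hstep : ∀ s : Fin n, w (s + 1) - w s = -(η • v s) := by
    intro s
    rcases Nat.eq_zero_or_pos s with hs | hs
    · rw [hs, hw1]; abel
    · rw [hw s hs s.isLt.le]; abel
  have hg : ∀ s : Fin n, ‖g s‖ ≤ |L| * |η| * ‖v 0‖ := by
    intro s
    calc ‖g s‖ ≤ L * ‖w (s + 1) - w s‖ := hlip _ _ _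
      _ ≤ |L| * ‖w (s + 1) - w s‖ := by gcongr; exact le_abs_self L
      _ = |L| * |η| * ‖v s‖ := by rw [hstep, norm_neg, norm_smul, Real.norm_eq_abs, mul_assoc]
      _ ≤ |L| * |η| * ‖v 0‖ := by gcongr; exact hnorm s s.isLt.le
  have hsum : ‖∑ s, g s‖ ≤ n * (|L| * |η| * ‖v 0‖) := by
    simpa using norm_sum_le_of_le univ fun s _ => hg s
  rw [inv_smul_sum_range_eq_add_sum_of_sub_eq v g hvg, ← hv0, sub_add_cancel_left, norm_neg]
  calc ‖∑ s, g s‖ ^ 2 ≤ (n * (|L| * |η| * ‖v 0‖)) ^ 2 := pow_le_pow_left₀ (norm_nonneg _) hsum 2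
    _ = η ^ 2 * n ^ 2 * L ^ 2 * ‖v 0‖ ^ 2 := by rw [← sq_abs L, ← sq_abs η]; ring
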